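/- arXiv:1901.10845 — 2 statements merged into one kernel-verified Lean document; each statement's English description precedes it below -/
import Mathlib

section
/- Let N ≥ 2, 0 < s < 1 and 1 ≤ q < 2*_s := 2N/(N−2s). Let Ω ⊆ ℝ^N be an open bounded set with A(Ω) > 0, let u be a first minimizer for λ_{s,q}(Ω), set λ = λ_{s,q}(Ω), U(x,z) = (P_z ∗ u)(x), and let T = sup { t > 0 : |{u > t}| ≥ |Ω|(1 − A(Ω)/9) }. Fix α > 0. Then for every t with T/4 ≤ t ≤ (3/8)T and every z with 0 < z ≤ (T/(8·√(α β_{N,s} λ)))^{1/s}, one has |{x : u(x) > T/2} ∖ {x : U(x,z) > t}| ≤ 1/α and |{x : U(x,z) > t} ∖ {x : u(x) > T/8}| ≤ 1/α. -/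
open MeasureTheory Filter
open scoped ENNReal NNReal Topology FourierTransform RealInnerProductSpace

noncomputable section

/-- Euclidean space ℝ^N -/
abbrev Eu (N : ℕ) := EuclideanSpace ℝ (Fin N)

/-- Squared Gagliardo seminorm `[u]_{W^{s,2}}²`, as an extended nonnegative real. -/
def gagliardoSq (N : ℕ) (s : ℝ) (u : Eu N → ℝ) : ℝ≥0∞ :=
  ∫⁻ x, ∫⁻ y, ENNReal.ofReal (|u x - u y| ^ 2 / ‖x - y‖ ^ ((N : ℝ) + 2 * s))

/-- Squared Gagliardo seminorm, as a real number. -/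
def gagliardoSqR (N : ℕ) (s : ℝ) (u : Eu N → ℝ) : ℝ :=
  (gagliardoSq N s u).toReal

/-- The sharp fractional Poincaré–Sobolev constant
`λ_{s,q}(Ω) = inf { [u]_{W^{s,2}}² : u ∈ C_c^∞(Ω), ‖u‖_{L^q(Ω)} = 1 }`. -/
def sobolevConst (N : ℕ) (s q : ℝ) (Ω : Set (Eu N)) : ℝ :=
  sInf { c : ℝ | ∃ u : Eu N → ℝ, ContDiff ℝ (⊤ : ℕ∞) u ∧ HasCompactSupport u ∧
    tsupport u ⊆ Ω ∧ (∫ x in Ω, |u x| ^ q) = 1 ∧ c = gagliardoSqR N s u }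

/-- The Fraenkel asymmetry `A(Ω)`. -/
def asym (N : ℕ) (Ω : Set (Eu N)) : ℝ :=
  sInf { c : ℝ | ∃ (x₀ : Eu N) (r : ℝ), 0 < r ∧
    volume (Metric.ball x₀ r) = volume Ω ∧
    c = (volume (symmDiff Ω (Metric.ball x₀ r))).toReal / (volume Ω).toReal }

/-- The normalizing constant `β_{N,s}`. -/
def betaC (N : ℕ) (s : ℝ) : ℝ :=
  (∫ x : Eu N, ((1 : ℝ) + ‖x‖ ^ 2) ^ (-((N : ℝ) + 2 * s) / 2))⁻¹

/-- The Poisson kernel `P_z(x) = β_{N,s} z^{2s} (z² + |x|²)^{-(N+2s)/2}`. -/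
def poisson (N : ℕ) (s z : ℝ) (x : Eu N) : ℝ :=
  betaC N s * z ^ (2 * s) * ((z ^ 2 + ‖x‖ ^ 2) ^ (-((N : ℝ) + 2 * s) / 2))

/-- The Caffarelli–Silvestre extension `U(x,z) = (P_z ∗ u)(x)`. -/
def csExt (N : ℕ) (s : ℝ) (u : Eu N → ℝ) (x : Eu N) (z : ℝ) : ℝ :=
  ∫ y, poisson N s z (x - y) * u y

/-- A first minimizer for `λ_{s,q}(Ω)`: a nonnegative measurable function, vanishing a.e.
outside `Ω`, with unit `L^q` norm, realizing the infimum, and positive inside `Ω`. -/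
def IsFirstMinimizer (N : ℕ) (s q : ℝ) (Ω : Set (Eu N)) (u : Eu N → ℝ) : Prop :=
  Measurable u ∧ (∀ x, 0 ≤ u x) ∧ (∀ᵐ x, x ∉ Ω → u x = 0) ∧
  (∫ x in Ω, u x ^ q) = 1 ∧ gagliardoSqR N s u = sobolevConst N s q Ω ∧
  ∀ x ∈ Ω, 0 < u x

/-- The level `T` from (4.1): `T = sup { t > 0 : |{u > t}| ≥ |Ω| (1 - A(Ω)/9) }`. -/
def levelT (N : ℕ) (Ω : Set (Eu N)) (u : Eu N → ℝ) : ℝ :=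
  sSup { t : ℝ | 0 < t ∧
    volume Ω * ENNReal.ofReal (1 - asym N Ω / 9) ≤ volume {x | t < u x} }


lemma aux_int_base (N : ℕ) {s : ℝ} (hs0 : 0 < s) :
    Integrable (fun x : Eu N => ((1:ℝ) + ‖x‖ ^ 2) ^ (-((N : ℝ) + 2 * s) / 2)) := by
  apply integrable_rpow_neg_one_add_norm_sq (E := Eu N) (μ := volume)
  rw [finrank_euclideanSpace_fin]
  linarith

lemma aux_int_base_pos (N : ℕ) {s : ℝ} (hs0 : 0 < s) :
    0 < ∫ x : Eu N, ((1:ℝ) + ‖x‖ ^ 2) ^ (-((N : ℝ) + 2 * s) / 2) := by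
  rw [integral_pos_iff_support_of_nonneg (fun x => by positivity) (aux_int_base N hs0)]
  have h : (Function.support fun x : Eu N => ((1:ℝ) + ‖x‖ ^ 2) ^ (-((N : ℝ) + 2 * s) / 2))
      = Set.univ := by
    ext x; simp only [Function.mem_support, Set.mem_univ, iff_true]
    positivity
  rw [h]
  simpa using (isOpen_univ (X := Eu N)).measure_pos volume ⟨0, trivial⟩

lemma betaC_pos (N : ℕ) {s : ℝ} (hs0 : 0 < s) : 0 < betaC N s :=
  inv_pos.2 (aux_int_base_pos N hs0)

lemma aux_int_kernel (N : ℕ) {s z : ℝ} (hs0 : 0 < s) (hz : 0 < z) :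
    Integrable (fun x : Eu N => (z ^ 2 + ‖x‖ ^ 2) ^ (-((N : ℝ) + 2 * s) / 2)) := by
  set p : ℝ := -((N : ℝ) + 2 * s) / 2 with hp
  have h1 : Integrable (fun x : Eu N =>
      ((z:ℝ)^2)^p * (((1:ℝ) + ‖z⁻¹ • x‖ ^ 2) ^ p)) := by
    apply Integrable.const_mul
    exact (integrable_comp_smul_iff volume
      (fun x : Eu N => ((1:ℝ) + ‖x‖ ^ 2) ^ p) (inv_ne_zero hz.ne')).2 (aux_int_base N hs0)
  apply h1.congr
  filter_upwards with x
  have hxz : ((1:ℝ) + ‖z⁻¹ • x‖ ^ 2) = (z^2)⁻¹ * (z^2 + ‖x‖^2) := by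
    rw [norm_smul]
    simp only [norm_inv, Real.norm_eq_abs, abs_of_pos hz, mul_pow]
    field_simp
  rw [hxz, Real.mul_rpow (by positivity) (by positivity),
    Real.inv_rpow (by positivity), ← mul_assoc, mul_inv_cancel₀ (by positivity), one_mul]

theorem poisson_integral (N : ℕ) {s z : ℝ} (hs0 : 0 < s) (hz : 0 < z) :
    ∫ x : Eu N, poisson N s z x = 1 := by
  have hb := betaC_pos N hs0
  set p : ℝ := -((N : ℝ) + 2 * s) / 2 with hp
  have hcomp : ∀ x : Eu N, ((z ^ 2 + ‖z • x‖ ^ 2) ^ p) = (z^2)^p * (((1:ℝ)+‖x‖^2) ^ p) := by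
    intro x
    rw [norm_smul]
    simp only [Real.norm_eq_abs, abs_of_pos hz, mul_pow]
    rw [show z^2 + z^2*‖x‖^2 = z^2 * (1 + ‖x‖^2) by ring,
      Real.mul_rpow (by positivity) (by positivity)]
  have hscale := Measure.integral_comp_smul_of_nonneg (μ := (volume : Measure (Eu N)))
    (fun y : Eu N => (z ^ 2 + ‖y‖ ^ 2) ^ p) z (hR := hz.le)
  simp only [hcomp, smul_eq_mul] at hscale
  rw [integral_const_mul] at hscale
  have hbase : ∫ x : Eu N, ((1:ℝ) + ‖x‖ ^ 2) ^ p = (betaC N s)⁻¹ := by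
    rw [betaC, inv_inv]
  rw [hbase, eq_comm, inv_mul_eq_iff_eq_mul₀ (by positivity)] at hscale
  have hint : ∫ x : Eu N, poisson N s z x
      = betaC N s * z ^ (2*s) * ∫ x : Eu N, (z ^ 2 + ‖x‖ ^ 2) ^ p := by
    simp only [poisson]
    rw [← integral_const_mul]
  rw [hint, hscale]
  have h1 : ((z:ℝ)^2)^p = z ^ (2*p) := by
    rw [← Real.rpow_natCast z 2, ← Real.rpow_mul hz.le]
    norm_num
  have h2 : (z:ℝ) ^ (Module.finrank ℝ (Eu N)) = z ^ ((N:ℕ):ℝ) := by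
    rw [finrank_euclideanSpace_fin, Real.rpow_natCast]
  rw [h1, h2]
  have h3 : z ^ (2*s) * (z ^ ((N:ℕ):ℝ) * z ^ (2*p)) = 1 := by
    rw [← Real.rpow_add hz, ← Real.rpow_add hz, show 2*s + (((N:ℕ):ℝ) + 2*p) = 0 by
      rw [hp]; push_cast; ring]
    exact Real.rpow_zero z
  calc betaC N s * z ^ (2*s) * (z ^ ((N:ℕ):ℝ) * ((z:ℝ) ^ (2*p) * (betaC N s)⁻¹))
      = (betaC N s * (betaC N s)⁻¹) * (z ^ (2*s) * (z ^ ((N:ℕ):ℝ) * z ^ (2*p))) := by ring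
    _ = 1 := by rw [mul_inv_cancel₀ hb.ne', h3, one_mul]

lemma poisson_nonneg (N : ℕ) {s z : ℝ} (hs0 : 0 < s) (hz : 0 < z) (x : Eu N) :
    0 ≤ poisson N s z x := by
  have hb := betaC_pos N hs0
  unfold poisson
  positivity

lemma poisson_continuous (N : ℕ) (s : ℝ) {z : ℝ} (hz : 0 < z) :
    Continuous (poisson N s z) := by
  apply continuous_const.mul
  apply Continuous.rpow_const
  · exact continuous_const.add ((continuous_norm).pow 2)
  · intro x; left; positivity

lemma poisson_integrable (N : ℕ) {s z : ℝ} (hs0 : 0 < s) (hz : 0 < z) :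
    Integrable (poisson N s z) :=
  (aux_int_kernel N hs0 hz).const_mul _

lemma poisson_le_bound (N : ℕ) {s z : ℝ} (hs0 : 0 < s) (hz : 0 < z) (x : Eu N) :
    poisson N s z x ≤ betaC N s * z ^ (2*s) * (z^2) ^ (-((N : ℝ) + 2 * s) / 2) := by
  have hb := betaC_pos N hs0
  have h : (z ^ 2 + ‖x‖ ^ 2) ^ (-((N : ℝ) + 2 * s) / 2)
      ≤ (z^2) ^ (-((N : ℝ) + 2 * s) / 2) := by
    apply Real.rpow_le_rpow_of_nonpos (by positivity) (by nlinarith [sq_nonneg ‖x‖])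
    have : (0:ℝ) ≤ (N : ℝ) + 2 * s := by positivity
    linarith
  have h2 : 0 ≤ betaC N s * z ^ (2*s) := by positivity
  unfold poisson
  exact mul_le_mul_of_nonneg_left h h2

lemma poisson_le_singular (N : ℕ) {s z : ℝ} (hs0 : 0 < s) (hz : 0 < z) {x : Eu N}
    (hx : x ≠ 0) :
    poisson N s z x ≤ betaC N s * z ^ (2*s) * (‖x‖ ^ ((N : ℝ) + 2 * s))⁻¹ := by
  have hb := betaC_pos N hs0
  have hn : (0:ℝ) < ‖x‖ := norm_pos_iff.2 hx
  have h : (z ^ 2 + ‖x‖ ^ 2) ^ (-((N : ℝ) + 2 * s) / 2)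
      ≤ (‖x‖ ^ ((N : ℝ) + 2 * s))⁻¹ := by
    have h1 : (z ^ 2 + ‖x‖ ^ 2) ^ (-((N : ℝ) + 2 * s) / 2)
        ≤ (‖x‖^2) ^ (-((N : ℝ) + 2 * s) / 2) := by
      apply Real.rpow_le_rpow_of_nonpos (by positivity) (by nlinarith [sq_nonneg z])
      have : (0:ℝ) ≤ (N : ℝ) + 2 * s := by positivity
      linarith
    have h2 : (‖x‖^2 : ℝ) ^ (-((N : ℝ) + 2 * s) / 2) = (‖x‖ ^ ((N : ℝ) + 2 * s))⁻¹ := by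
      rw [← Real.rpow_natCast ‖x‖ 2, ← Real.rpow_mul (norm_nonneg x),
        show ((2:ℕ):ℝ) * (-((N : ℝ) + 2 * s) / 2) = -((N : ℝ) + 2 * s) by push_cast; ring,
        Real.rpow_neg (norm_nonneg x)]
    rw [← h2]; exact h1
  have h2 : 0 ≤ betaC N s * z ^ (2*s) := by positivity
  unfold poisson
  exact mul_le_mul_of_nonneg_left h h2

lemma csExt_sq_le (N : ℕ) {s z : ℝ} (hs0 : 0 < s) (hz : 0 < z)
    {u : Eu N → ℝ} (hum : Measurable u) (huint : Integrable u) (x : Eu N) :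
    ENNReal.ofReal ((csExt N s u x z - u x)^2)
      ≤ ∫⁻ y, ENNReal.ofReal (poisson N s z (x - y) * (u y - u x)^2) := by
  set P : Eu N → ℝ := poisson N s z with hPdef
  have hP0 : ∀ w, 0 ≤ P w := poisson_nonneg N hs0 hz
  have hPc : Continuous P := poisson_continuous N s hz
  have hPxc : Continuous fun y : Eu N => P (x - y) :=
    hPc.comp (continuous_const.sub continuous_id)
  have hPxint : Integrable (fun y => P (x - y)) :=
    (poisson_integrable N hs0 hz).comp_sub_left x
  have hPx1 : ∫ y, P (x - y) = 1 := by
    rw [integral_sub_left_eq_self P volume x]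
    exact poisson_integral N hs0 hz
  have hPu : Integrable (fun y => P (x - y) * u y) := by
    apply huint.bdd_mul hPxc.aestronglyMeasurable
    refine Filter.Eventually.of_forall (fun y => (?_ : ‖P (x - y)‖ ≤ betaC N s * z ^ (2*s) * (z^2) ^ (-((N : ℝ) + 2 * s) / 2)))
    rw [Real.norm_eq_abs, abs_of_nonneg (hP0 _)]
    exact poisson_le_bound N hs0 hz _
  have hPd : Integrable (fun y => P (x - y) * (u y - u x)) := by
    simp_rw [mul_sub]
    exact hPu.sub (hPxint.mul_const (u x))
  have hrepr : csExt N s u x z - u x = ∫ y, P (x - y) * (u y - u x) := by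
    simp_rw [mul_sub]
    rw [integral_sub hPu (hPxint.mul_const (u x)), integral_mul_const, hPx1, one_mul]
    rfl
  -- Cauchy-Schwarz setup
  set φ : Eu N → ℝ := fun y => Real.sqrt (P (x - y)) with hφdef
  have hφc : Continuous φ := Real.continuous_sqrt.comp hPxc
  have hdm : Measurable fun y => u y - u x := hum.sub measurable_const
  have hpq : Real.HolderConjugate 2 2 := Real.holderConjugate_iff.mpr ⟨one_lt_two, by norm_num⟩
  have hCS := ENNReal.lintegral_mul_le_Lp_mul_Lq (volume : Measure (Eu N)) hpq
    (f := fun y => ENNReal.ofReal (φ y))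
    (g := fun y => ENNReal.ofReal (φ y * |u y - u x|))
    (hφc.measurable.ennreal_ofReal.aemeasurable)
    ((hφc.measurable.mul hdm.abs).ennreal_ofReal.aemeasurable)
  have hφsq : ∀ y, φ y ^ 2 = P (x - y) := fun y => Real.sq_sqrt (hP0 _)
  have hfg : ∀ y, (fun y => ENNReal.ofReal (φ y)) y * (fun y => ENNReal.ofReal (φ y * |u y - u x|)) y
      = ENNReal.ofReal (P (x - y) * |u y - u x|) := by
    intro y
    rw [← ENNReal.ofReal_mul (Real.sqrt_nonneg _), ← mul_assoc, ← sq, hφsq]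
  have hf2 : ∀ y, (ENNReal.ofReal (φ y)) ^ (2:ℝ) = ENNReal.ofReal (P (x - y)) := by
    intro y
    rw [ENNReal.rpow_two, ← ENNReal.ofReal_pow (Real.sqrt_nonneg _), hφsq]
  have hg2 : ∀ y, (ENNReal.ofReal (φ y * |u y - u x|)) ^ (2:ℝ)
      = ENNReal.ofReal (P (x - y) * (u y - u x)^2) := by
    intro y
    rw [ENNReal.rpow_two, ← ENNReal.ofReal_pow (by positivity), mul_pow, hφsq, sq_abs]
  simp only [Pi.mul_apply] at hCS
  simp_rw [hfg, hf2, hg2] at hCS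
  have hlint1 : ∫⁻ y, ENNReal.ofReal (P (x - y)) = 1 := by
    rw [← ofReal_integral_eq_lintegral_ofReal hPxint (Filter.Eventually.of_forall fun y => hP0 _),
      hPx1, ENNReal.ofReal_one]
  rw [hlint1, ENNReal.one_rpow, one_mul] at hCS
  -- conclude
  have habs : ENNReal.ofReal |csExt N s u x z - u x|
      ≤ (∫⁻ y, ENNReal.ofReal (P (x - y) * (u y - u x)^2)) ^ ((1:ℝ)/2) := by
    refine le_trans ?_ hCS
    rw [hrepr]
    calc ENNReal.ofReal |∫ y, P (x - y) * (u y - u x)|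
        ≤ ENNReal.ofReal (∫ y, |P (x - y) * (u y - u x)|) := by
          apply ENNReal.ofReal_le_ofReal
          simpa only [Real.norm_eq_abs] using
            norm_integral_le_integral_norm (μ := volume)
              (fun y => P (x - y) * (u y - u x))
      _ = ∫⁻ y, ENNReal.ofReal (P (x - y) * |u y - u x|) := by
          rw [ofReal_integral_eq_lintegral_ofReal hPd.abs
            (Filter.Eventually.of_forall fun y => abs_nonneg _)]
          congr 1
          ext y
          rw [abs_mul, abs_of_nonneg (hP0 _)]
  calc ENNReal.ofReal ((csExt N s u x z - u x)^2)
      = (ENNReal.ofReal |csExt N s u x z - u x|) ^ 2 := by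
        rw [← ENNReal.ofReal_pow (abs_nonneg _), sq_abs]
    _ ≤ ((∫⁻ y, ENNReal.ofReal (P (x - y) * (u y - u x)^2)) ^ ((1:ℝ)/2)) ^ 2 := by
        exact pow_le_pow_left₀ (zero_le) habs 2
    _ = ∫⁻ y, ENNReal.ofReal (P (x - y) * (u y - u x)^2) := by
        rw [← ENNReal.rpow_two, ← ENNReal.rpow_mul]
        norm_num


/-- **Lemma 4.2**: closeness of the level sets of a first minimizer `u` and of its
Caffarelli–Silvestre extension `U(·,z)`, for `T/4 ≤ t ≤ (3/8)T` and
`0 < z ≤ (T/(8√(α β_{N,s} λ)))^{1/s}`. -/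
theorem level_sets_L1_closeness
    (N : ℕ) (hN : 2 ≤ N) (s q : ℝ) (hs0 : 0 < s) (hs1 : s < 1)
    (hq1 : 1 ≤ q) (hq2 : q < 2 * N / ((N : ℝ) - 2 * s))
    (Ω : Set (Eu N)) (hΩo : IsOpen Ω) (hΩb : Bornology.IsBounded Ω)
    (hA : 0 < asym N Ω)
    (u : Eu N → ℝ) (hu : IsFirstMinimizer N s q Ω u)
    (α : ℝ) (hα : 0 < α)
    (t : ℝ) (ht1 : levelT N Ω u / 4 ≤ t) (ht2 : t ≤ 3 / 8 * levelT N Ω u)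
    (z : ℝ) (hz0 : 0 < z)
    (hz1 : z ≤ (levelT N Ω u
        / (8 * Real.sqrt (α * betaC N s * sobolevConst N s q Ω))) ^ (1 / s)) :
    volume ({x | levelT N Ω u / 2 < u x} \ {x | t < csExt N s u x z})
        ≤ ENNReal.ofReal (1 / α) ∧
    volume ({x | t < csExt N s u x z} \ {x | levelT N Ω u / 8 < u x})
        ≤ ENNReal.ofReal (1 / α) := by
  obtain ⟨hum, hu0, huae, huq, hug, -⟩ := hu
  have hΩm : MeasurableSet Ω := hΩo.measurableSet
  have hΩvol : volume Ω < ⊤ := hΩb.measure_lt_top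
  have hβ : 0 < betaC N s := betaC_pos N hs0
  have hss : (1:ℝ)/s ≠ 0 := by positivity
  set T := levelT N Ω u with hTdef
  set lam := sobolevConst N s q Ω with hlamdef
  -- T > 0
  have hT0 : 0 < T := by
    have hTnn : 0 ≤ T := by linarith
    rcases hTnn.lt_or_eq with h | h
    · exact h
    · exfalso
      rw [← h, zero_div, Real.zero_rpow hss] at hz1
      linarith
  have hlam0 : 0 < lam := by
    by_contra hcon
    push_neg at hcon
    have hsq : Real.sqrt (α * betaC N s * lam) = 0 :=
      Real.sqrt_eq_zero'.2 (by nlinarith [mul_pos hα hβ])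
    rw [hsq, mul_zero, div_zero, Real.zero_rpow hss] at hz1
    linarith
  -- u is integrable
  have huqint : IntegrableOn (fun x => u x ^ q) Ω := by
    by_contra hcon
    rw [integral_undef hcon] at huq
    norm_num at huq
  have huO : IntegrableOn u Ω := by
    apply Integrable.mono' (huqint.add (integrableOn_const (C := (1:ℝ)) hΩvol.ne))
      hum.aestronglyMeasurable.restrict
    filter_upwards with x
    rw [Real.norm_eq_abs, abs_of_nonneg (hu0 x)]
    rcases le_or_gt (u x) 1 with h | h
    · have h2 : (0:ℝ) ≤ u x ^ q := Real.rpow_nonneg (hu0 x) q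
      simp only [Pi.add_apply]
      linarith
    · have h2 : u x ≤ u x ^ q := by
        calc u x = u x ^ (1:ℝ) := (Real.rpow_one _).symm
          _ ≤ u x ^ q := Real.rpow_le_rpow_of_exponent_le h.le hq1
      simp only [Pi.add_apply]
      linarith
  have huint : Integrable u := by
    rw [← integrableOn_univ, ← Set.union_compl_self Ω]
    apply IntegrableOn.union huO
    have h0 : u =ᵐ[volume.restrict Ωᶜ] 0 := by
      rw [EventuallyEq, ae_restrict_iff' hΩm.compl]
      filter_upwards [huae] with x hx hxc
      exact hx hxc
    exact (integrable_zero _ _ _).congr h0.symm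
  -- consequence of the choice of z
  have hzs : z ^ (2*s) * (α * betaC N s * lam) * 64 ≤ T^2 := by
    have hD : 0 < Real.sqrt (α * betaC N s * lam) := Real.sqrt_pos.2 (by positivity)
    have h1 : z ^ s ≤ T / (8 * Real.sqrt (α * betaC N s * lam)) := by
      have h2 := Real.rpow_le_rpow hz0.le hz1 hs0.le
      rwa [← Real.rpow_mul (by positivity), one_div, inv_mul_cancel₀ hs0.ne',
        Real.rpow_one] at h2
    have h3 : z ^ (2*s) = (z ^ s)^2 := by
      rw [show 2*s = s*2 by ring, Real.rpow_mul hz0.le, Real.rpow_two]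
    have h4 : (z^s)^2 ≤ (T / (8 * Real.sqrt (α * betaC N s * lam)))^2 :=
      pow_le_pow_left₀ (Real.rpow_nonneg hz0.le s) h1 2
    have h5 : (T / (8 * Real.sqrt (α * betaC N s * lam)))^2
        = T^2 / (64 * (α * betaC N s * lam)) := by
      rw [div_pow, mul_pow, Real.sq_sqrt (by positivity)]
      norm_num
    rw [h5] at h4
    have h6 : 0 < α * betaC N s * lam := by positivity
    rw [h3]
    calc (z^s)^2 * (α * betaC N s * lam) * 64
        ≤ (T^2 / (64 * (α * betaC N s * lam))) * (α * betaC N s * lam) * 64 := by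
          apply mul_le_mul_of_nonneg_right (mul_le_mul_of_nonneg_right h4 h6.le)
          norm_num
      _ = T^2 := by field_simp
  -- the Gagliardo seminorm is finite
  have hG : gagliardoSq N s u = ENNReal.ofReal lam := by
    have hfin : gagliardoSq N s u ≠ ⊤ := by
      intro hcon
      have h0 : gagliardoSqR N s u = 0 := by rw [gagliardoSqR, hcon]; simp
      rw [hug] at h0
      linarith
    rw [← hug, gagliardoSqR, ENNReal.ofReal_toReal hfin]
  -- main L² estimate
  have hmain : ∫⁻ x, ENNReal.ofReal ((csExt N s u x z - u x)^2)
      ≤ ENNReal.ofReal (betaC N s * z ^ (2*s)) * ENNReal.ofReal lam := by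
    rw [← hG, gagliardoSq]
    calc ∫⁻ x, ENNReal.ofReal ((csExt N s u x z - u x)^2)
        ≤ ∫⁻ x, ∫⁻ y, ENNReal.ofReal (poisson N s z (x - y) * (u y - u x)^2) :=
          lintegral_mono (csExt_sq_le N hs0 hz0 hum huint)
      _ ≤ ∫⁻ x, ∫⁻ y, ENNReal.ofReal (betaC N s * z ^ (2*s)) *
            ENNReal.ofReal (|u x - u y| ^ 2 / ‖x - y‖ ^ ((N : ℝ) + 2 * s)) := by
          apply lintegral_mono
          intro x
          apply lintegral_mono_ae
          have hae : ∀ᵐ y : Eu N, y ≠ x := by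
            haveI : Nontrivial (Eu N) := by
              have i : Fin N := ⟨0, by omega⟩
              refine ⟨EuclideanSpace.single i 1, 0, fun h => ?_⟩
              have h2 := congrArg (fun v : Eu N => v i) h
              simp [EuclideanSpace.single_apply] at h2
            rw [ae_iff]
            have hset : {y : Eu N | ¬ y ≠ x} = {x} := by
              ext y; simp [eq_comm]
            rw [hset]
            exact measure_singleton x
          filter_upwards [hae] with y hyx
          have hw : x - y ≠ 0 := sub_ne_zero.2 (Ne.symm hyx)
          rw [← ENNReal.ofReal_mul (by positivity)]
          apply ENNReal.ofReal_le_ofReal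
          have h1 : poisson N s z (x - y)
              ≤ betaC N s * z^(2*s) * (‖x - y‖ ^ ((N:ℝ) + 2*s))⁻¹ :=
            poisson_le_singular N hs0 hz0 hw
          have h2 : |u x - u y|^2 = (u y - u x)^2 := by rw [sq_abs]; ring
          calc poisson N s z (x - y) * (u y - u x)^2
              ≤ (betaC N s * z^(2*s) * (‖x - y‖ ^ ((N:ℝ) + 2*s))⁻¹) * (u y - u x)^2 :=
                mul_le_mul_of_nonneg_right h1 (sq_nonneg _)
            _ = betaC N s * z^(2*s) *
                  (|u x - u y| ^ 2 / ‖x - y‖ ^ ((N : ℝ) + 2 * s)) := by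
                rw [h2, div_eq_mul_inv]; ring
      _ = ENNReal.ofReal (betaC N s * z ^ (2*s)) *
            ∫⁻ x, ∫⁻ y, ENNReal.ofReal (|u x - u y| ^ 2 / ‖x - y‖ ^ ((N : ℝ) + 2 * s)) := by
          simp_rw [lintegral_const_mul' _ _ ENNReal.ofReal_ne_top]
  have hfinal : ∫⁻ x, ENNReal.ofReal ((csExt N s u x z - u x)^2)
      ≤ ENNReal.ofReal (T^2/64) * ENNReal.ofReal (1/α) := by
    refine hmain.trans ?_
    rw [← ENNReal.ofReal_mul (by positivity), ← ENNReal.ofReal_mul (by positivity)]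
    apply ENNReal.ofReal_le_ofReal
    rw [div_mul_div_comm, mul_one, le_div_iff₀ (by positivity)]
    calc betaC N s * z ^ (2*s) * lam * (64*α)
        = z ^ (2*s) * (α * betaC N s * lam) * 64 := by ring
      _ ≤ T^2 := hzs
  -- Chebyshev
  have cheb : ∀ A : Set (Eu N),
      (∀ x ∈ A, T/8 ≤ |csExt N s u x z - u x|) → volume A ≤ ENNReal.ofReal (1/α) := by
    intro A hA
    have hUm : Measurable fun x => csExt N s u x z := by
      have hsm : StronglyMeasurable fun p : Eu N × Eu N => poisson N s z (p.1 - p.2) * u p.2 :=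
        (((poisson_continuous N s hz0).comp
          (continuous_fst.sub continuous_snd)).stronglyMeasurable.mul
          ((hum.comp measurable_snd).stronglyMeasurable))
      exact hsm.integral_prod_right'.measurable
    set f : Eu N → ℝ≥0∞ := fun x => ENNReal.ofReal ((csExt N s u x z - u x)^2) with hfdef
    have hfm : AEMeasurable f := (((hUm.sub hum).pow_const 2).ennreal_ofReal).aemeasurable
    have hsub : A ⊆ {x | ENNReal.ofReal (T^2/64) ≤ f x} := by
      intro x hx
      simp only [Set.mem_setOf_eq, hfdef]
      apply ENNReal.ofReal_le_ofReal
      calc T^2/64 = (T/8)^2 := by ring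
        _ ≤ |csExt N s u x z - u x|^2 := pow_le_pow_left₀ (by positivity) (hA x hx) 2
        _ = (csExt N s u x z - u x)^2 := sq_abs _
    have hch := mul_meas_ge_le_lintegral₀ hfm (ENNReal.ofReal (T^2/64))
    have hle : ENNReal.ofReal (T^2/64) * volume A
        ≤ ENNReal.ofReal (T^2/64) * ENNReal.ofReal (1/α) := by
      calc ENNReal.ofReal (T^2/64) * volume A
          ≤ ENNReal.ofReal (T^2/64) * volume {x | ENNReal.ofReal (T^2/64) ≤ f x} :=
            mul_le_mul_right (measure_mono hsub) _
        _ ≤ ∫⁻ x, f x := hch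
        _ ≤ ENNReal.ofReal (T^2/64) * ENNReal.ofReal (1/α) := hfinal
    exact (ENNReal.mul_le_mul_iff_right (ENNReal.ofReal_pos.2 (by positivity)).ne'
      ENNReal.ofReal_ne_top).1 hle
  constructor
  · apply cheb
    intro x hx
    obtain ⟨hx1, hx2⟩ := hx
    simp only [Set.mem_setOf_eq] at hx1
    simp only [Set.mem_setOf_eq, not_lt] at hx2
    calc T/8 ≤ -(csExt N s u x z - u x) := by linarith
      _ ≤ |csExt N s u x z - u x| := neg_le_abs _
  · apply cheb
    intro x hx
    obtain ⟨hx1, hx2⟩ := hx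
    simp only [Set.mem_setOf_eq] at hx1
    simp only [Set.mem_setOf_eq, not_lt] at hx2
    calc T/8 ≤ csExt N s u x z - u x := by linarith
      _ ≤ |csExt N s u x z - u x| := le_abs_self _
end
end

section
/- (Closeness of level sets, L^∞ case.) Let N ≥ 2, 0 < s < 1 and 1 ≤ q < 2*_s := 2N/(N−2s). Let Ω ⊆ ℝ^N be an open bounded set with A(Ω) > 0, let u be a continuous first minimizer for λ_{s,q}(Ω) with u = 0 everywhere outside Ω, set U(x,z) = (P_z ∗ u)(x), and let T = sup { t > 0 : |{u > t}| ≥ |Ω|(1 − A(Ω)/9) }. Suppose there exists a constant C > 0 such that sup_{x ∈ ℝ^N} |U(x,z) − u(x)| ≤ C z^s for every z > 0. Then for every t with T/4 ≤ t ≤ (3/8)T and every z with 0 < z ≤ (T/(8C))^{1/s}, writing E_{t,z} = {x ∈ ℝ^N : U(x,z) > t}, one has the inclusions {x : u(x) > T/2} ⊆ E_{t,z} ⊆ {x : u(x) > T/8}; in particular E_{t,z} ⊆ Ω, |Ω| − |E_{t,z}| ≤ (1/9)|Ω| A(Ω), and A(E_{t,z}) ≥ (7/11) A(Ω). -/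
open MeasureTheory Filter
open scoped ENNReal NNReal Topology FourierTransform RealInnerProductSpace

noncomputable section

section Aux

lemma exists_ball_vol' (N : ℕ) (hN : 0 < N) (x₀ : Eu N) (v : ℝ≥0∞) (h0 : v ≠ 0) (ht : v ≠ ⊤) :
    ∃ r : ℝ, 0 < r ∧ volume (Metric.ball x₀ r) = v := by
  haveI : Nontrivial (Eu N) := Module.nontrivial_of_finrank_pos (R := ℝ)
    (by rw [finrank_euclideanSpace_fin]; exact hN)
  set v1 := volume (Metric.ball (0 : Eu N) 1) with hv1
  have v1pos : 0 < v1 := Metric.measure_ball_pos _ _ one_pos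
  have v1fin : v1 ≠ ⊤ := measure_ball_lt_top.ne
  have hv1t : (0:ℝ) < v1.toReal := ENNReal.toReal_pos v1pos.ne' v1fin
  have hvt : (0:ℝ) < v.toReal := ENNReal.toReal_pos h0 ht
  have hX : (0:ℝ) < v.toReal / v1.toReal := div_pos hvt hv1t
  refine ⟨(v.toReal / v1.toReal) ^ ((N:ℝ)⁻¹), Real.rpow_pos_of_pos hX _, ?_⟩
  rw [Measure.addHaar_ball _ x₀ (Real.rpow_pos_of_pos hX _).le]
  have hfr : Module.finrank ℝ (Eu N) = N := finrank_euclideanSpace_fin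
  rw [hfr]
  have hpow : ((v.toReal / v1.toReal) ^ ((N:ℝ)⁻¹)) ^ (N : ℕ) = v.toReal / v1.toReal := by
    rw [← Real.rpow_natCast (_ ^ ((N:ℝ)⁻¹)) N, ← Real.rpow_mul hX.le,
      inv_mul_cancel₀ (by exact_mod_cast hN.ne' : (N:ℝ) ≠ 0), Real.rpow_one]
  rw [hpow, ENNReal.ofReal_div_of_pos hv1t, ENNReal.ofReal_toReal ht, ENNReal.ofReal_toReal v1fin,
    ENNReal.div_mul_cancel v1pos.ne' v1fin]

lemma asym_bddBelow (N : ℕ) (Ω : Set (Eu N)) :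
    BddBelow { c : ℝ | ∃ (x₀ : Eu N) (r : ℝ), 0 < r ∧
      volume (Metric.ball x₀ r) = volume Ω ∧
      c = (volume (symmDiff Ω (Metric.ball x₀ r))).toReal / (volume Ω).toReal } := by
  refine ⟨0, ?_⟩
  rintro c ⟨x₀, r, hr, hv, rfl⟩
  positivity

lemma asym_le (N : ℕ) (Ω : Set (Eu N)) (x₀ : Eu N) (r : ℝ) (hr : 0 < r)
    (hv : volume (Metric.ball x₀ r) = volume Ω) :
    asym N Ω ≤ (volume (symmDiff Ω (Metric.ball x₀ r))).toReal / (volume Ω).toReal :=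
  csInf_le (asym_bddBelow N Ω) ⟨x₀, r, hr, hv, rfl⟩

end Aux

set_option maxHeartbeats 1000000 in
/-- **Closeness of level sets, `L^∞` case** (Lemma 6.2): under a uniform bound
`‖U(·,z) - u‖_∞ ≤ C z^s`, for `T/4 ≤ t ≤ (3/8)T` and `0 < z ≤ (T/(8C))^{1/s}` one has
`{u > T/2} ⊆ E_{t,z} ⊆ {u > T/8}`; in particular `E_{t,z} ⊆ Ω`,
`|Ω| - |E_{t,z}| ≤ |Ω| A(Ω)/9` and `A(E_{t,z}) ≥ (7/11) A(Ω)`. -/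
theorem level_sets_Linfty_closeness
    (N : ℕ) (hN : 2 ≤ N) (s q : ℝ) (hs0 : 0 < s) (hs1 : s < 1)
    (hq1 : 1 ≤ q) (hq2 : q < 2 * N / ((N : ℝ) - 2 * s))
    (Ω : Set (Eu N)) (hΩo : IsOpen Ω) (hΩb : Bornology.IsBounded Ω)
    (hA : 0 < asym N Ω)
    (u : Eu N → ℝ) (hu : IsFirstMinimizer N s q Ω u) (huc : Continuous u)
    (huout : ∀ x, x ∉ Ω → u x = 0)
    (C : ℝ) (hC : 0 < C)
    (hbound : ∀ z : ℝ, 0 < z → ∀ x : Eu N, |csExt N s u x z - u x| ≤ C * z ^ s)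
    (t : ℝ) (ht1 : levelT N Ω u / 4 ≤ t) (ht2 : t ≤ 3 / 8 * levelT N Ω u)
    (z : ℝ) (hz0 : 0 < z) (hz1 : z ≤ (levelT N Ω u / (8 * C)) ^ (1 / s)) :
    {x | levelT N Ω u / 2 < u x} ⊆ {x | t < csExt N s u x z} ∧
    {x | t < csExt N s u x z} ⊆ {x | levelT N Ω u / 8 < u x} ∧
    {x | t < csExt N s u x z} ⊆ Ω ∧
    (volume Ω).toReal - (volume {x | t < csExt N s u x z}).toReal
        ≤ 1 / 9 * (volume Ω).toReal * asym N Ω ∧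
    asym N {x | t < csExt N s u x z} ≥ 7 / 11 * asym N Ω := by
  classical
  obtain ⟨hum, hupos, -, -, -, huΩpos⟩ := hu
  have hN0 : 0 < N := by omega
  set A := asym N Ω with hAdef
  have hΩfin : volume Ω ≠ ⊤ := hΩb.measure_lt_top.ne
  -- Ω has positive volume
  have hΩpos : volume Ω ≠ 0 := by
    intro h0
    have : { c : ℝ | ∃ (x₀ : Eu N) (r : ℝ), 0 < r ∧
        volume (Metric.ball x₀ r) = volume Ω ∧
        c = (volume (symmDiff Ω (Metric.ball x₀ r))).toReal / (volume Ω).toReal } = ∅ := by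
      ext c
      simp only [Set.mem_setOf_eq, Set.mem_empty_iff_false, iff_false]
      rintro ⟨x₀, r, hr, hv, -⟩
      rw [h0] at hv
      exact (Metric.measure_ball_pos volume x₀ hr).ne' hv
    rw [hAdef, asym, this, Real.sInf_empty] at hA
    exact lt_irrefl 0 hA
  have ha : (0:ℝ) < (volume Ω).toReal := ENNReal.toReal_pos hΩpos hΩfin
  set a := (volume Ω).toReal with hadef
  -- A ≤ 2
  have hA2 : A ≤ 2 := by
    obtain ⟨rΩ, hrΩ, hballΩ⟩ := exists_ball_vol' N hN0 0 (volume Ω) hΩpos hΩfin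
    refine (asym_le N Ω 0 rΩ hrΩ hballΩ).trans ?_
    rw [div_le_iff₀ ha]
    have h1 : volume (symmDiff Ω (Metric.ball (0:Eu N) rΩ)) ≤ volume Ω + volume (Metric.ball (0:Eu N) rΩ) :=
      (measure_mono Set.symmDiff_subset_union).trans (measure_union_le _ _)
    rw [hballΩ] at h1
    have h2 : (volume (symmDiff Ω (Metric.ball (0:Eu N) rΩ))).toReal ≤ (volume Ω + volume Ω).toReal :=
      ENNReal.toReal_mono (by simp [hΩfin, ENNReal.add_ne_top]) h1
    rw [ENNReal.toReal_add hΩfin hΩfin] at h2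
    linarith
  have hA9 : (0:ℝ) < 1 - A / 9 := by linarith
  set θ := volume Ω * ENNReal.ofReal (1 - A / 9) with hθdef
  have hθpos : θ ≠ 0 := by
    simp only [hθdef, ne_eq, mul_eq_zero, hΩpos, false_or, ENNReal.ofReal_eq_zero, not_le]
    exact hA9
  have hθfin : θ ≠ ⊤ := ENNReal.mul_ne_top hΩfin ENNReal.ofReal_ne_top
  have hθlt : θ < volume Ω := by
    have h1 : ENNReal.ofReal (1 - A / 9) < 1 := by
      rw [← ENNReal.ofReal_one]
      exact ENNReal.ofReal_lt_ofReal_iff_of_nonneg hA9.le |>.2 (by linarith)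
    calc θ < volume Ω * 1 := by
            rw [hθdef]
            exact (ENNReal.mul_lt_mul_iff_right hΩpos hΩfin).2 h1
      _ = volume Ω := mul_one _
  -- the set S defining T
  set S := { t : ℝ | 0 < t ∧ θ ≤ volume {x | t < u x} } with hSdef
  have hTS : levelT N Ω u = sSup S := rfl
  set T := levelT N Ω u with hTdef
  -- S is nonempty
  have hSne : S.Nonempty := by
    have hmono : Monotone (fun n : ℕ => {x | 1/((n:ℝ)+1) < u x}) := by
      intro m n hmn x hx
      simp only [Set.mem_setOf_eq] at hx ⊢
      have : 1/((n:ℝ)+1) ≤ 1/((m:ℝ)+1) := by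
        apply one_div_le_one_div_of_le (by positivity)
        exact_mod_cast by omega
      linarith
    have htend := tendsto_measure_iUnion_atTop (μ := volume) hmono
    have hsup : volume Ω ≤ volume (⋃ n : ℕ, {x | 1/((n:ℝ)+1) < u x}) := by
      apply measure_mono
      intro x hx
      have hx0 : 0 < u x := huΩpos x hx
      obtain ⟨n, hn⟩ := exists_nat_one_div_lt hx0
      exact Set.mem_iUnion.2 ⟨n, hn⟩
    have hlt : θ < volume (⋃ n : ℕ, {x | 1/((n:ℝ)+1) < u x}) := lt_of_lt_of_le hθlt hsup
    have := htend (Ioi_mem_nhds hlt)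
    simp only [Filter.mem_map, Filter.mem_atTop_sets] at this
    obtain ⟨n, hn⟩ := this
    refine ⟨1/((n:ℝ)+1), by positivity, ?_⟩
    have := hn n le_rfl
    exact le_of_lt this
  -- S is bounded above
  have hcs : HasCompactSupport u := by
    apply HasCompactSupport.intro hΩb.isCompact_closure
    intro x hx
    exact huout x fun h => hx (subset_closure h)
  obtain ⟨M, hM⟩ := hcs.exists_bound_of_continuous huc
  have hSbdd : BddAbove S := by
    refine ⟨M, ?_⟩
    rintro t' ⟨ht'0, ht'v⟩
    by_contra h
    push_neg at h
    have : {x | t' < u x} = ∅ := by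
      ext x
      simp only [Set.mem_setOf_eq, Set.mem_empty_iff_false, iff_false, not_lt]
      have := hM x
      rw [Real.norm_eq_abs, abs_le] at this
      linarith [this.2]
    rw [this, measure_empty, nonpos_iff_eq_zero] at ht'v
    exact hθpos ht'v
  -- T > 0
  obtain ⟨t₀, ht₀S⟩ := id hSne
  have hT0 : 0 < T := lt_of_lt_of_le ht₀S.1 (le_csSup hSbdd ht₀S)
  -- Key: volume {u > T/2} ≥ θ
  have hKey : θ ≤ volume {x | T/2 < u x} := by
    obtain ⟨t', ht'S, ht'⟩ := exists_lt_of_lt_csSup hSne (by rw [← hTS]; linarith : T/2 < sSup S)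
    refine ht'S.2.trans (measure_mono ?_)
    intro x hx
    simp only [Set.mem_setOf_eq] at hx ⊢
    linarith
  -- C z^s ≤ T/8
  have hCz : C * z ^ s ≤ T / 8 := by
    have hTC : (0:ℝ) < T / (8*C) := div_pos hT0 (by positivity)
    have hzs : z ^ s ≤ T/(8*C) := by
      calc z ^ s ≤ ((T/(8*C)) ^ (1/s)) ^ s := Real.rpow_le_rpow hz0.le hz1 hs0.le
        _ = T/(8*C) := by
            rw [← Real.rpow_mul hTC.le, one_div, inv_mul_cancel₀ hs0.ne', Real.rpow_one]
    calc C * z^s ≤ C * (T/(8*C)) := mul_le_mul_of_nonneg_left hzs hC.le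
      _ = T/8 := by field_simp
  set E := {x | t < csExt N s u x z} with hEdef
  -- inclusion 1
  have hsub1 : {x | T/2 < u x} ⊆ E := by
    intro x hx
    simp only [Set.mem_setOf_eq, hEdef] at hx ⊢
    have hb := abs_le.1 (hbound z hz0 x)
    linarith [hb.1]
  -- inclusion 2
  have hsub2 : E ⊆ {x | T/8 < u x} := by
    intro x hx
    simp only [Set.mem_setOf_eq, hEdef] at hx ⊢
    have hb := abs_le.1 (hbound z hz0 x)
    linarith [hb.2]
  -- inclusion 3
  have hsub3 : {x | T/8 < u x} ⊆ Ω := by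
    intro x hx
    by_contra h
    simp only [Set.mem_setOf_eq, huout x h] at hx
    linarith
  have hEΩ : E ⊆ Ω := hsub2.trans hsub3
  -- measure comparisons
  have hGmeas : MeasurableSet {x | T/2 < u x} := measurableSet_lt measurable_const hum
  have hGΩ : {x | T/2 < u x} ⊆ Ω := by
    intro x hx
    apply hsub3
    simp only [Set.mem_setOf_eq] at hx ⊢
    linarith
  have hGfin : volume {x | T/2 < u x} ≠ ⊤ := ((measure_mono hGΩ).trans_lt hΩfin.lt_top).ne
  have hEvol : θ ≤ volume E := hKey.trans (measure_mono hsub1)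
  have hEle : volume E ≤ volume Ω := measure_mono hEΩ
  have hEfin : volume E ≠ ⊤ := (hEle.trans_lt hΩfin.lt_top).ne
  have hEpos : volume E ≠ 0 := fun h => hθpos (le_antisymm (h ▸ hEvol) (zero_le))
  set e := (volume E).toReal with hedef
  have he : (0:ℝ) < e := ENNReal.toReal_pos hEpos hEfin
  have hθtoReal : θ.toReal = a * (1 - A/9) := by
    rw [hθdef, ENNReal.toReal_mul, ENNReal.toReal_ofReal hA9.le]
  have hea : e ≤ a := ENNReal.toReal_mono hΩfin hEle
  have heθ : a * (1 - A/9) ≤ e := by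
    rw [← hθtoReal]
    exact ENNReal.toReal_mono hEfin hEvol
  -- conclusion 4
  have hconc4 : a - e ≤ 1/9 * a * A := by linarith
  refine ⟨hsub1, hsub2, hEΩ, hconc4, ?_⟩
  -- conclusion 5 : asym E ≥ 7/11 A
  have hdiffE : (volume (Ω \ E)).toReal ≤ a * (A/9) := by
    have h1 : volume (Ω \ E) ≤ volume (Ω \ {x | T/2 < u x}) :=
      measure_mono (Set.diff_subset_diff_right hsub1)
    have h2 : volume (Ω \ {x | T/2 < u x}) = volume Ω - volume {x | T/2 < u x} :=
      measure_diff hGΩ hGmeas.nullMeasurableSet hGfin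
    have h3 : (volume (Ω \ E)).toReal ≤ (volume Ω - volume {x | T/2 < u x}).toReal := by
      apply ENNReal.toReal_mono (by simp [ENNReal.sub_ne_top hΩfin]) (h2 ▸ h1)
    rw [ENNReal.toReal_sub_of_le (measure_mono hGΩ) hΩfin] at h3
    have h4 : a * (1 - A/9) ≤ (volume {x | T/2 < u x}).toReal := by
      rw [← hθtoReal]
      exact ENNReal.toReal_mono hGfin hKey
    linarith
  rw [ge_iff_le, asym]
  obtain ⟨r₀, hr₀, hball₀⟩ := exists_ball_vol' N hN0 0 (volume E) hEpos hEfin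
  refine le_csInf ⟨_, 0, r₀, hr₀, hball₀, rfl⟩ ?_
  rintro c ⟨x₀, r, hr, hv, rfl⟩
  obtain ⟨r', hr', hv'⟩ := exists_ball_vol' N hN0 x₀ (volume Ω) hΩpos hΩfin
  haveI : Nontrivial (Eu N) := Module.nontrivial_of_finrank_pos (R := ℝ)
    (by rw [finrank_euclideanSpace_fin]; exact hN0)
  have hrr' : r ≤ r' := by
    by_contra h
    push_neg at h
    have hlt : volume (Metric.ball x₀ r') < volume (Metric.ball x₀ r) := by
      rw [Measure.addHaar_ball _ x₀ hr'.le, Measure.addHaar_ball _ x₀ hr.le]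
      have hfr : Module.finrank ℝ (Eu N) = N := finrank_euclideanSpace_fin
      rw [hfr]
      refine (ENNReal.mul_lt_mul_iff_left (Metric.measure_ball_pos volume _ one_pos).ne'
        measure_ball_lt_top.ne).2 ?_
      rw [ENNReal.ofReal_lt_ofReal_iff (by positivity)]
      exact pow_lt_pow_left₀ h hr'.le hN0.ne'
    rw [hv, hv'] at hlt
    exact absurd hEle (not_le.2 hlt)
  have hBB' : Metric.ball x₀ r ⊆ Metric.ball x₀ r' := Metric.ball_subset_ball hrr'
  -- symmDiff computations
  have hf1 : volume (symmDiff Ω E) = volume (Ω \ E) := by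
    rw [symmDiff_of_ge (hEΩ : E ≤ Ω)]
  have hf3 : (volume (symmDiff (Metric.ball x₀ r) (Metric.ball x₀ r'))).toReal = a - e := by
    rw [symmDiff_of_le (hBB' : Metric.ball x₀ r ≤ Metric.ball x₀ r'),
      measure_diff hBB' measurableSet_ball.nullMeasurableSet measure_ball_lt_top.ne,
      hv, hv', ENNReal.toReal_sub_of_le hEle hΩfin]
  have hf2fin : volume (symmDiff E (Metric.ball x₀ r)) ≠ ⊤ := by
    refine ((measure_mono Set.symmDiff_subset_union).trans_lt ?_).ne
    exact (measure_union_le _ _).trans_lt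
      (ENNReal.add_lt_top.2 ⟨hEfin.lt_top, measure_ball_lt_top⟩)
  -- triangle inequality
  have htri : volume (symmDiff Ω (Metric.ball x₀ r')) ≤
      volume (symmDiff Ω E) + volume (symmDiff E (Metric.ball x₀ r)) +
      volume (symmDiff (Metric.ball x₀ r) (Metric.ball x₀ r')) := by
    calc volume (symmDiff Ω (Metric.ball x₀ r')) ≤
        volume (symmDiff Ω E) + volume (symmDiff E (Metric.ball x₀ r')) :=
          measure_symmDiff_le _ _ _
      _ ≤ volume (symmDiff Ω E) + (volume (symmDiff E (Metric.ball x₀ r)) +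
          volume (symmDiff (Metric.ball x₀ r) (Metric.ball x₀ r'))) :=
          add_le_add_right (measure_symmDiff_le _ _ _) _
      _ = _ := by ring
  have hf1fin : volume (symmDiff Ω E) ≠ ⊤ := by
    rw [hf1]; exact ((measure_mono Set.diff_subset).trans_lt hΩfin.lt_top).ne
  have hf3fin : volume (symmDiff (Metric.ball x₀ r) (Metric.ball x₀ r')) ≠ ⊤ := by
    refine ((measure_mono Set.symmDiff_subset_union).trans_lt ?_).ne
    exact (measure_union_le _ _).trans_lt
      (ENNReal.add_lt_top.2 ⟨measure_ball_lt_top, measure_ball_lt_top⟩)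
  have hAa : A * a ≤ (volume (symmDiff Ω (Metric.ball x₀ r'))).toReal := by
    have := asym_le N Ω x₀ r' hr' hv'
    rw [← hAdef, le_div_iff₀ ha] at this
    exact this
  have htriR : (volume (symmDiff Ω (Metric.ball x₀ r'))).toReal ≤
      (volume (symmDiff Ω E)).toReal + (volume (symmDiff E (Metric.ball x₀ r))).toReal +
      (a - e) := by
    have hfin : volume (symmDiff Ω E) + volume (symmDiff E (Metric.ball x₀ r)) +
        volume (symmDiff (Metric.ball x₀ r) (Metric.ball x₀ r')) ≠ ⊤ := by
      simp [ENNReal.add_ne_top, hf1fin, hf2fin, hf3fin]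
    have := ENNReal.toReal_mono hfin htri
    rw [ENNReal.toReal_add (by simp [ENNReal.add_ne_top, hf1fin, hf2fin]) hf3fin,
      ENNReal.toReal_add hf1fin hf2fin, hf3] at this
    exact this
  have hX2 : 7/9 * A * a ≤ (volume (symmDiff E (Metric.ball x₀ r))).toReal := by
    have hd : (volume (symmDiff Ω E)).toReal ≤ a * (A/9) := by rw [hf1]; exact hdiffE
    have hae : a - e ≤ a * (A/9) := by linarith
    linarith
  rw [← hedef, le_div_iff₀ he]
  have h1 : A * e ≤ A * a := mul_le_mul_of_nonneg_left hea hA.le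
  have h2 : 0 ≤ A * a := mul_nonneg hA.le ha.le
  linarith
end
end
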